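/- The function T : ℕ → ℕ assigning to each x the least k such that Code.evaln k (Code.ofNatCode (K x)) 0 = some x (the runtime of the shortest program for x) is not computable. -/

import Mathlib

open scoped Classical
open Nat.Partrec Nat.Partrec.Code

theorem K_exists (x : ℕ) : ∃ e : ℕ, (Code.ofNatCode e).eval 0 = Part.some x :=
  ⟨Code.encodeCode (Code.const x), by
    rw [← Code.encodeCode_eq, ← Code.ofNatCode_eq, Denumerable.ofNat_encode]
    exact Code.eval_const x 0⟩

/-- Kolmogorov complexity: the least index `e` such that program `e` on input `0` outputs `x`. -/
noncomputable def K (x : ℕ) : ℕ := Nat.find (K_exists x)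

theorem T_exists (x : ℕ) : ∃ k : ℕ, Code.evaln k (Code.ofNatCode (K x)) 0 = some x := by
  have h : x ∈ (Code.ofNatCode (K x)).eval 0 := by
    have := Nat.find_spec (K_exists x)
    rw [show K x = Nat.find (K_exists x) from rfl, this]
    exact Part.mem_some x
  obtain ⟨k, hk⟩ := Code.evaln_complete.mp h
  exact ⟨k, hk⟩

/-- The running time of the shortest program for `x`. -/
noncomputable def T (x : ℕ) : ℕ := Nat.find (T_exists x)

/-!
If `T` were bounded by a computable function `t`, then `K x` could be computed as the least `e`
such that program `e` outputs `x` within `t x` steps. But `K` is not computable (Berry's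
paradox): as `K` is injective it is unbounded, so `f m := min {x | m ≤ K x}` would be
computable, and by the recursion theorem some program `c` outputs `f (c + 1)`, whence
`c + 1 ≤ K (f (c + 1)) ≤ c`.
-/

theorem eval_ofNatCode_K (x : ℕ) : (ofNatCode (K x)).eval 0 = Part.some x :=
  Nat.find_spec (K_exists x)

theorem K_le_of_eval_ofNatCode {e x : ℕ} (h : (ofNatCode e).eval 0 = Part.some x) : K x ≤ e :=
  Nat.find_min' (K_exists x) h

theorem K_le_encodeCode {c : Code} {x : ℕ} (h : c.eval 0 = Part.some x) : K x ≤ encodeCode c :=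
  K_le_of_eval_ofNatCode <| by
    rwa [← ofNatCode_eq, ← encodeCode_eq, Denumerable.ofNat_encode]

theorem K_injective : Function.Injective K := fun x y hxy =>
  Part.some_injective <| (eval_ofNatCode_K x).symm.trans (hxy ▸ eval_ofNatCode_K y)

theorem exists_le_K (m : ℕ) : ∃ x, m ≤ K x :=
  (K_injective.nat_tendsto_atTop.eventually_ge_atTop m).exists

theorem not_computable_of_forall_le_K {f : ℕ → ℕ} (hf : ∀ m, m ≤ K (f m)) :
    ¬ Computable f := by
  intro hfc
  obtain ⟨c, hc⟩ := fixed_point (f := fun c => Code.const (f (encodeCode c + 1)))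
    (primrec_const.to_comp.comp (hfc.comp (Computable.succ.comp Computable.encode)))
  have hle : K (f (encodeCode c + 1)) ≤ encodeCode c :=
    K_le_encodeCode (by rw [← hc, eval_const])
  have hge := hf (encodeCode c + 1)
  omega

theorem K_not_computable : ¬ Computable K := fun hK =>
  not_computable_of_forall_le_K (fun m => Nat.find_spec (exists_le_K m)) <|
    Computable.find (P := fun m x => m ≤ K x)
      ⟨_, Primrec.nat_le.decide.to_comp.comp Computable.fst (hK.comp Computable.snd)⟩
      exists_le_K

theorem evaln_T (x : ℕ) : evaln (T x) (ofNatCode (K x)) 0 = some x :=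
  Nat.find_spec (T_exists x)

theorem computable_K_of_T_le {t : ℕ → ℕ} (ht : Computable t) (hle : ∀ x, T x ≤ t x) :
    Computable K := by
  have hK : ∀ x, evaln (t x) (ofNatCode (K x)) 0 = some x := fun x =>
    evaln_mono (hle x) (evaln_T x)
  have hex : ∀ x, ∃ e, evaln (t x) (ofNatCode e) 0 = some x := fun x => ⟨K x, hK x⟩
  have hevaln : Computable fun p : ℕ × ℕ => evaln (t p.1) (ofNatCode p.2) 0 :=
    primrec_evaln.to_comp.comp
      (((ht.comp Computable.fst).pair ((Computable.ofNat Code).comp Computable.snd)).pair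
        (Computable.const 0))
  have hfind : Computable fun x => Nat.find (hex x) :=
    Computable.find (P := fun x e => evaln (t x) (ofNatCode e) 0 = some x)
      ⟨_, Primrec.eq.decide.to_comp.comp hevaln (Computable.option_some.comp Computable.fst)⟩
      hex
  refine hfind.of_eq fun x => le_antisymm (Nat.find_min' (hex x) (hK x)) ?_
  exact K_le_of_eval_ofNatCode (Part.eq_some_iff.2 (evaln_sound (Nat.find_spec (hex x))))

theorem T_not_computable : ¬ Computable T := fun hT =>
  K_not_computable (computable_K_of_T_le hT fun _ => le_rfl)
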